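/- For every dimension d ≥ 1 and every exponent 0 < α < d there is a constant C = C(d) > 0 such that for every n ≥ 1, every family of points v_1, …, v_n ∈ [0,1]^d, and every minimal spanning tree T over v_1, …, v_n, one has Σ_{{i,j} ∈ E(T)} ‖v_i − v_j‖^α ≤ C^α · n^{1 − α/d}. -/

import Mathlib

/-
The cut property of a minimal spanning tree gives, for distinct edges `ab` and `cd`,
`|ab| ≤ max |ac| |bd|`. Hence the balls of radius `|e| / 8` around the midpoints of the edges `e`
overlap at most `5 ^ (2d)` times: edges whose balls share a point have comparable lengths, and
their pairs of endpoints form a separated set in `ℝ^d × ℝ^d`, to which the Besicovitch packing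
bound applies. Comparing volumes inside a ball of radius `ρ` containing the points gives
`∑ |e| ^ d ≤ (250 ρ) ^ d`, and by concavity of `t ↦ t ^ (α / d)` over the `n - 1` edges,
`∑ |e| ^ α ≤ (250 ρ) ^ α n ^ (1 - α / d)`.
-/

/-- The `α`-energy of a graph `T` on vertex set `Fin n`, with vertex `i` placed at
`v i` in the metric space `X`: the sum over the edges `{i,j}` of `T` of
`dist (v i) (v j) ^ α`. -/
noncomputable def energy {X : Type*} [MetricSpace X] {n : ℕ} (v : Fin n → X)
    (T : SimpleGraph (Fin n)) (α : ℝ) : ℝ :=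
  ∑ e ∈ T.edgeSet.toFinite.toFinset,
    Sym2.lift ⟨fun i j => dist (v i) (v j) ^ α, fun i j => by simp only [dist_comm]⟩ e

/-- `T` is a minimal spanning tree over the points `v 0, …, v (n-1)`: it is a tree on
the vertex set `Fin n` minimizing the total edge length `E₁` among all such trees. -/
def IsMST {X : Type*} [MetricSpace X] {n : ℕ} (v : Fin n → X)
    (T : SimpleGraph (Fin n)) : Prop :=
  T.IsTree ∧ ∀ T' : SimpleGraph (Fin n), T'.IsTree → energy v T 1 ≤ energy v T' 1

namespace SimpleGraph

variable {V : Type*} {G T : SimpleGraph V}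

lemma Connected.reachable_deleteEdges_or (hG : G.Connected) (a b x : V) :
    (G.deleteEdges {s(a, b)}).Reachable a x ∨ (G.deleteEdges {s(a, b)}).Reachable b x := by
  obtain ⟨w⟩ := hG.preconnected x a
  induction w with
  | nil => exact .inl .rfl
  | @cons x y a hxy w ih =>
    by_cases he : s(x, y) = s(a, b)
    · rcases Sym2.eq_iff.mp he with ⟨rfl, -⟩ | ⟨rfl, -⟩
      exacts [.inl .rfl, .inr .rfl]
    · have hxy' : (G.deleteEdges {s(a, b)}).Adj y x := by
        simpa [deleteEdges_adj, hxy.symm, Sym2.eq_swap] using he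
      exact ih.imp (·.trans hxy'.reachable) (·.trans hxy'.reachable)

lemma IsTree.not_reachable_deleteEdges (hT : T.IsTree) {a b : V} (hab : T.Adj a b) :
    ¬(T.deleteEdges {s(a, b)}).Reachable a b :=
  isBridge_iff.mp (isAcyclic_iff_forall_adj_isBridge.mp hT.isAcyclic hab)

lemma IsTree.deleteEdges_sup_edge (hT : T.IsTree) {a b a' b' : V} (hab : T.Adj a b)
    (ha' : (T.deleteEdges {s(a, b)}).Reachable a a')
    (hb' : (T.deleteEdges {s(a, b)}).Reachable b b') :
    (T.deleteEdges {s(a, b)} ⊔ edge a' b').IsTree := by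
  set G := T.deleteEdges {s(a, b)}
  have hnr : ¬G.Reachable a' b' := fun h ↦
    hT.not_reachable_deleteEdges hab (ha'.trans (h.trans hb'.symm))
  have hne : a' ≠ b' := by rintro rfl; exact hnr .rfl
  have hadj : (G ⊔ edge a' b').Adj a' b' := .inr (by simp [edge_adj, hne])
  have hreach (x : V) : (G ⊔ edge a' b').Reachable x a' := by
    rcases hT.connected.reachable_deleteEdges_or a b x with hx | hx
    · exact ((hx.symm.trans ha').mono le_sup_left)
    · exact ((hx.symm.trans hb').mono le_sup_left).trans hadj.symm.reachable
  have : Nonempty V := ⟨a⟩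
  exact ⟨⟨fun x y ↦ (hreach x).trans (hreach y).symm⟩,
    (hT.isAcyclic.anti (deleteEdges_le _)).sup_edge_of_not_reachable hnr⟩

end SimpleGraph

open MeasureTheory in
open scoped Classical in
theorem sum_measure_le_mul_measure_of_card_le {Ω ι : Type*} [MeasurableSpace Ω] (μ : Measure Ω)
    (s : Finset ι) {A : ι → Set Ω} {B : Set Ω} (hA : ∀ i ∈ s, MeasurableSet (A i))
    (hAB : ∀ i ∈ s, A i ⊆ B) {K : ℕ} (hK : ∀ x, (s.filter (x ∈ A ·)).card ≤ K) :
    ∑ i ∈ s, μ (A i) ≤ K * μ B := by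
  have hpt (x : Ω) : ∑ i ∈ s, (A i).indicator 1 x ≤ B.indicator (fun _ ↦ (K : ENNReal)) x := by
    by_cases hx : x ∈ B
    · simp only [Set.indicator_apply, Pi.one_apply, Finset.sum_boole, hx, if_true]
      exact_mod_cast hK x
    · rw [Set.indicator_of_notMem hx]
      refine (Finset.sum_eq_zero fun i hi ↦ Set.indicator_of_notMem ?_ _).le
      exact fun hxA ↦ hx (hAB i hi hxA)
  calc ∑ i ∈ s, μ (A i) = ∑ i ∈ s, ∫⁻ x, (A i).indicator 1 x ∂μ :=
        Finset.sum_congr rfl fun i hi ↦ (lintegral_indicator_one (hA i hi)).symm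
    _ = ∫⁻ x, ∑ i ∈ s, (A i).indicator 1 x ∂μ :=
        (lintegral_finsetSum _ fun i hi ↦ measurable_one.indicator (hA i hi)).symm
    _ ≤ ∫⁻ x, B.indicator (fun _ ↦ (K : ENNReal)) x ∂μ := lintegral_mono hpt
    _ ≤ K * μ B := lintegral_indicator_const_le _ _

theorem Real.sum_rpow_le_card_rpow_mul_sum_rpow {ι : Type*} (s : Finset ι) {f : ι → ℝ}
    (hf : ∀ i ∈ s, 0 ≤ f i) {p : ℝ} (hp₀ : 0 ≤ p) (hp₁ : p ≤ 1) :
    ∑ i ∈ s, f i ^ p ≤ (s.card : ℝ) ^ (1 - p) * (∑ i ∈ s, f i) ^ p := by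
  rcases s.eq_empty_or_nonempty with rfl | hs
  · simp only [Finset.sum_empty, Finset.card_empty, Nat.cast_zero]
    positivity
  have hm : (0 : ℝ) < s.card := by exact_mod_cast hs.card_pos
  have hjensen := (Real.concaveOn_rpow hp₀ hp₁).le_map_sum (t := s) (w := fun _ ↦ (s.card : ℝ)⁻¹)
    (p := f) (fun _ _ ↦ by positivity) (by simp [hm.ne']) hf
  simp only [smul_eq_mul, ← Finset.mul_sum] at hjensen
  rw [Real.mul_rpow (by positivity) (Finset.sum_nonneg hf), Real.inv_rpow hm.le,
    inv_mul_le_iff₀ hm, ← mul_assoc, ← div_eq_mul_inv] at hjensen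
  rwa [Real.rpow_sub hm, Real.rpow_one]

theorem card_le_five_pow_finrank_of_separated {E : Type*} [NormedAddCommGroup E]
    [NormedSpace ℝ E] [FiniteDimensional ℝ E] {ι : Type*} (s : Finset ι) (p : ι → E) (z : E)
    {r : ℝ} (hr : 0 < r) (hball : ∀ i ∈ s, dist (p i) z ≤ 2 * r)
    (hsep : ∀ i ∈ s, ∀ j ∈ s, i ≠ j → r ≤ dist (p i) (p j)) :
    s.card ≤ 5 ^ Module.finrank ℝ E := by
  classical
  set q : ι → E := fun i ↦ r⁻¹ • (p i - z)
  have hnorm_sub (i j : ι) : ‖q i - q j‖ = r⁻¹ * dist (p i) (p j) := by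
    simp only [q, ← smul_sub, sub_sub_sub_cancel_right, norm_smul, norm_inv, Real.norm_eq_abs,
      abs_of_pos hr, dist_eq_norm]
  have hq_sep : ∀ i ∈ s, ∀ j ∈ s, i ≠ j → 1 ≤ ‖q i - q j‖ := fun i hi j hj hij ↦ by
    rw [hnorm_sub, le_inv_mul_iff₀ hr, mul_one]
    exact hsep i hi j hj hij
  have hinj : Set.InjOn q s := fun i hi j hj hij ↦ by
    by_contra hne
    have := hq_sep i hi j hj hne
    rw [hij, sub_self, norm_zero] at this
    linarith
  rw [← Finset.card_image_of_injOn hinj]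
  refine Besicovitch.card_le_of_separated _ ?_ ?_
  · simp only [Finset.mem_image, forall_exists_index, and_imp, forall_apply_eq_imp_iff₂]
    intro i hi
    rw [norm_smul, norm_inv, Real.norm_eq_abs, abs_of_pos hr, ← dist_eq_norm, inv_mul_le_iff₀ hr]
    linarith [hball i hi]
  · simp only [Finset.mem_image, forall_exists_index, and_imp, forall_apply_eq_imp_iff₂]
    intro i hi j hj hne
    exact hq_sep i hi j hj (by rintro rfl; exact hne rfl)

section MST

open SimpleGraph

variable {X : Type*} [MetricSpace X] {n : ℕ} {v : Fin n → X} {T : SimpleGraph (Fin n)}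

noncomputable def edgeDist (v : Fin n → X) : Sym2 (Fin n) → ℝ :=
  Sym2.lift ⟨fun i j ↦ dist (v i) (v j), fun _ _ ↦ dist_comm _ _⟩

@[simp] lemma edgeDist_mk (a b : Fin n) : edgeDist v s(a, b) = dist (v a) (v b) := rfl

lemma edgeDist_nonneg (e : Sym2 (Fin n)) : 0 ≤ edgeDist v e := by
  induction e using Sym2.ind with | h a b => exact dist_nonneg

lemma energy_eq_sum_edgeDist_rpow (v : Fin n → X) (T : SimpleGraph (Fin n)) (α : ℝ) :
    energy v T α = ∑ e ∈ T.edgeSet.toFinite.toFinset, edgeDist v e ^ α :=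
  Finset.sum_congr rfl fun e _ ↦ by induction e using Sym2.ind with | h a b => rfl

lemma energy_deleteEdges_sup_edge {a b a' b' : Fin n} (hab : T.Adj a b) (hne : a' ≠ b')
    (hnew : ¬T.Adj a' b') (α : ℝ) :
    energy v (T.deleteEdges {s(a, b)} ⊔ edge a' b') α + dist (v a) (v b) ^ α =
      energy v T α + dist (v a') (v b') ^ α := by
  classical
  have hedges : (T.deleteEdges {s(a, b)} ⊔ edge a' b').edgeSet.toFinite.toFinset =
      insert s(a', b') (T.edgeSet.toFinite.toFinset.erase s(a, b)) := by
    ext e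
    simp only [Set.Finite.mem_toFinset, edgeSet_sup, edgeSet_deleteEdges, edgeSet_edge_of_ne hne,
      Finset.mem_insert, Finset.mem_erase, Set.mem_union, Set.mem_sdiff, Set.mem_singleton_iff]
    tauto
  have hnotMem : s(a', b') ∉ T.edgeSet.toFinite.toFinset.erase s(a, b) := by simp [hnew]
  have hmem : s(a, b) ∈ T.edgeSet.toFinite.toFinset := by simpa using hab
  rw [energy, energy, hedges, Finset.sum_insert hnotMem, ← Finset.add_sum_erase _ _ hmem]
  simp only [Sym2.lift_mk]
  ring

/-- The cut property of minimal spanning trees. -/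
theorem IsMST.dist_le_of_reachable_deleteEdges (hT : IsMST v T) {a b a' b' : Fin n}
    (hab : T.Adj a b) (ha' : (T.deleteEdges {s(a, b)}).Reachable a a')
    (hb' : (T.deleteEdges {s(a, b)}).Reachable b b') :
    dist (v a) (v b) ≤ dist (v a') (v b') := by
  have hnr := hT.1.not_reachable_deleteEdges hab
  by_cases hadj : T.Adj a' b'
  · have he : s(a', b') = s(a, b) := by
      by_contra he
      have : (T.deleteEdges {s(a, b)}).Adj a' b' := by simpa [hadj] using he
      exact hnr (ha'.trans (this.reachable.trans hb'.symm))
    rcases Sym2.eq_iff.mp he with ⟨rfl, rfl⟩ | ⟨rfl, rfl⟩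
    exacts [le_rfl, (dist_comm _ _).le]
  · have hne : a' ≠ b' := by rintro rfl; exact hnr (ha'.trans hb'.symm)
    have hmin := hT.2 _ (hT.1.deleteEdges_sup_edge hab ha' hb')
    have hexch := energy_deleteEdges_sup_edge (v := v) hab hne hadj 1
    simp only [Real.rpow_one] at hexch
    linarith

theorem IsMST.dist_le_max_dist (hT : IsMST v T) {a b c d : Fin n} (hab : T.Adj a b)
    (hcd : T.Adj c d) (hne : s(a, b) ≠ s(c, d)) :
    dist (v a) (v b) ≤ max (dist (v a) (v c)) (dist (v b) (v d)) := by
  rcases hT.1.connected.reachable_deleteEdges_or a b c with hc | hc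
  · have hcd' : (T.deleteEdges {s(a, b)}).Adj c d := by simpa [hcd] using hne.symm
    have := hT.dist_le_of_reachable_deleteEdges hab (hc.trans hcd'.reachable) .rfl
    rw [dist_comm (v d)] at this
    exact this.trans (le_max_right _ _)
  · exact (hT.dist_le_of_reachable_deleteEdges hab .rfl hc).trans (le_max_left _ _)

end MST

section Normed

open Module Metric MeasureTheory

variable {E : Type*} [NormedAddCommGroup E] [NormedSpace ℝ E] {n : ℕ} {v : Fin n → E}
  {T : SimpleGraph (Fin n)}

noncomputable def edgeMidpoint (v : Fin n → E) : Sym2 (Fin n) → E :=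
  Sym2.lift ⟨fun i j ↦ midpoint ℝ (v i) (v j), fun _ _ ↦ midpoint_comm _ _⟩

@[simp] lemma edgeMidpoint_mk (a b : Fin n) :
    edgeMidpoint v s(a, b) = midpoint ℝ (v a) (v b) := rfl

lemma dist_le_of_mem_of_dist_edgeMidpoint_le {e : Sym2 (Fin n)} {a : Fin n} (ha : a ∈ e)
    {y : E} {r : ℝ} (hy : dist y (edgeMidpoint v e) ≤ r) :
    dist (v a) y ≤ edgeDist v e / 2 + r := by
  obtain ⟨b, rfl⟩ := Sym2.mem_iff_exists.mp ha
  have hmid : dist (v a) (midpoint ℝ (v a) (v b)) = dist (v a) (v b) / 2 := by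
    rw [dist_left_midpoint (𝕜 := ℝ), Real.norm_two, inv_mul_eq_div]
  rw [edgeMidpoint_mk] at hy
  calc dist (v a) y ≤ dist (v a) (midpoint ℝ (v a) (v b)) + dist y (midpoint ℝ (v a) (v b)) :=
        dist_triangle_right _ _ _
    _ ≤ edgeDist v s(a, b) / 2 + r := by rw [hmid, edgeDist_mk]; linarith

theorem IsMST.card_le_of_dist_edgeMidpoint_lt [FiniteDimensional ℝ E] (hT : IsMST v T) (y : E)
    {F : Finset (Sym2 (Fin n))}
    (hF : ∀ e ∈ F, e ∈ T.edgeSet ∧ dist y (edgeMidpoint v e) < edgeDist v e / 8) :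
    F.card ≤ 5 ^ (2 * finrank ℝ E) := by
  rcases F.eq_empty_or_nonempty with rfl | hFne
  · simp
  have hend : ∀ e ∈ F, ∀ a ∈ e, dist (v a) y ≤ 5 / 8 * edgeDist v e := fun e he a ha ↦ by
    linarith [dist_le_of_mem_of_dist_edgeMidpoint_le ha (hF e he).2.le]
  -- `e.out` orients each edge; the bound holds for every orientation.
  have hsep : ∀ e ∈ F, ∀ f ∈ F, e ≠ f →
      edgeDist v e ≤ dist (v e.out.1, v e.out.2) (v f.out.1, v f.out.2) := by
    intro e he f hf hef
    have hadj (g : Sym2 (Fin n)) (hg : g ∈ F) : T.Adj g.out.1 g.out.2 := by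
      rw [← SimpleGraph.mem_edgeSet, Sym2.mk, Quot.out_eq]; exact (hF g hg).1
    have := hT.dist_le_max_dist (hadj e he) (hadj f hf) (by simpa [Sym2.mk, Quot.out_eq])
    simpa [Prod.dist_eq, ← edgeDist_mk, Sym2.mk, Quot.out_eq] using this
  have hcomp : ∀ e ∈ F, ∀ f ∈ F, edgeDist v f ≤ 5 / 3 * edgeDist v e := by
    intro e he f hf
    rcases eq_or_ne f e with rfl | hfe
    · linarith [(dist_nonneg.trans_lt (hF f hf).2)]
    have h := hsep f hf e he hfe
    rw [Prod.dist_eq] at h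
    have hmax : max (dist (v f.out.1) (v e.out.1)) (dist (v f.out.2) (v e.out.2)) ≤
        5 / 8 * edgeDist v f + 5 / 8 * edgeDist v e := by
      refine max_le ((dist_triangle_right _ _ y).trans ?_) ((dist_triangle_right _ _ y).trans ?_)
      · linarith [hend f hf _ (Sym2.out_fst_mem f), hend e he _ (Sym2.out_fst_mem e)]
      · linarith [hend f hf _ (Sym2.out_snd_mem f), hend e he _ (Sym2.out_snd_mem e)]
    linarith
  obtain ⟨e₀, he₀, hmin⟩ := F.exists_min_image (edgeDist v) hFne
  have hpos : 0 < edgeDist v e₀ := by linarith [dist_nonneg.trans_lt (hF e₀ he₀).2]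
  calc F.card ≤ 5 ^ finrank ℝ (E × E) := by
        refine card_le_five_pow_finrank_of_separated F (fun e ↦ (v e.out.1, v e.out.2)) (y, y)
          hpos ?_ fun e he f hf hef ↦ (hmin e he).trans (hsep e he f hf hef)
        intro e he
        have := hcomp e₀ he₀ e he
        rw [Prod.dist_eq, max_le_iff]
        constructor <;> nlinarith [hend e he _ (Sym2.out_fst_mem e),
          hend e he _ (Sym2.out_snd_mem e)]
    _ = 5 ^ (2 * finrank ℝ E) := by rw [finrank_prod, two_mul]

variable [FiniteDimensional ℝ E] [Nontrivial E]

theorem IsMST.sum_edgeDist_pow_finrank_le (hT : IsMST v T) {z : E} {ρ : ℝ}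
    (hv : ∀ i, dist (v i) z ≤ ρ) :
    ∑ e ∈ T.edgeSet.toFinite.toFinset, edgeDist v e ^ finrank ℝ E ≤
      (250 * ρ) ^ finrank ℝ E := by
  classical
  borelize E
  set F := T.edgeSet.toFinite.toFinset
  set d := finrank ℝ E
  have hsub : ∀ e ∈ F, ball (edgeMidpoint v e) (edgeDist v e / 8) ⊆ ball z (5 / 4 * ρ) := by
    intro e _ x hx
    induction e using Sym2.ind with | h a b => ?_
    have hmid : edgeMidpoint v s(a, b) ∈ closedBall z ρ :=
      (convex_closedBall z ρ).segment_subset (hv a) (hv b) (midpoint_mem_segment _ _)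
    have hab : dist (v a) (v b) ≤ 2 * ρ :=
      (dist_triangle_right _ _ z).trans (by linarith [hv a, hv b])
    rw [mem_ball, edgeDist_mk] at hx
    rw [mem_closedBall] at hmid
    rw [mem_ball]
    linarith [dist_triangle x (edgeMidpoint v s(a, b)) z]
  have hmult (x : E) :
      (F.filter fun e ↦ x ∈ ball (edgeMidpoint v e) (edgeDist v e / 8)).card ≤ 5 ^ (2 * d) :=
    hT.card_le_of_dist_edgeMidpoint_lt x fun e he ↦ by
      simpa only [Finset.mem_filter, F, Set.Finite.mem_toFinset, mem_ball] using he
  have hvol := sum_measure_le_mul_measure_of_card_le Measure.addHaar F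
    (fun _ _ ↦ measurableSet_ball) hsub hmult
  have hρ : 0 ≤ ρ := by
    obtain ⟨i⟩ := hT.1.connected.nonempty
    exact dist_nonneg.trans (hv i)
  have hK : ((5 ^ (2 * d) : ℕ) : ENNReal) = ENNReal.ofReal (5 ^ (2 * d)) := by
    rw [← ENNReal.ofReal_natCast]; norm_num
  have hr (e : Sym2 (Fin n)) : 0 ≤ edgeDist v e / 8 := by linarith [edgeDist_nonneg (v := v) e]
  rw [Finset.sum_congr rfl fun e _ ↦ Measure.addHaar_ball _ _ (hr e),
    Measure.addHaar_ball _ z (by positivity : 0 ≤ 5 / 4 * ρ), ← Finset.sum_mul, ← mul_assoc,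
    ENNReal.mul_le_mul_iff_left (measure_ball_pos _ _ one_pos).ne' measure_ball_lt_top.ne,
    ← ENNReal.ofReal_sum_of_nonneg (fun e _ ↦ pow_nonneg (hr e) _), hK,
    ← ENNReal.ofReal_mul (by positivity), ENNReal.ofReal_le_ofReal_iff (by positivity)] at hvol
  calc ∑ e ∈ F, edgeDist v e ^ d = 8 ^ d * ∑ e ∈ F, (edgeDist v e / 8) ^ d := by
        simp only [Finset.mul_sum, div_pow]
        exact Finset.sum_congr rfl fun e _ ↦ by field_simp
    _ ≤ 8 ^ d * (5 ^ (2 * d) * (5 / 4 * ρ) ^ d) := by gcongr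
    _ = (250 * ρ) ^ d := by
        rw [pow_mul, ← mul_assoc, ← mul_pow, ← mul_pow, ← mul_assoc]
        norm_num

theorem IsMST.energy_le (hT : IsMST v T) {z : E} {ρ : ℝ} (hv : ∀ i, dist (v i) z ≤ ρ) {α : ℝ}
    (hα₀ : 0 ≤ α) (hα : α ≤ finrank ℝ E) :
    energy v T α ≤ (250 * ρ) ^ α * (n : ℝ) ^ (1 - α / finrank ℝ E) := by
  classical
  set d := finrank ℝ E
  set F := T.edgeSet.toFinite.toFinset
  have hd : (0 : ℝ) < d := by exact_mod_cast finrank_pos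
  have hρ : 0 ≤ ρ := by
    obtain ⟨i⟩ := hT.1.connected.nonempty
    exact dist_nonneg.trans (hv i)
  have hθ₀ : 0 ≤ α / d := by positivity
  have hθ₁ : α / d ≤ 1 := (div_le_one hd).mpr hα
  have hpow {x : ℝ} (hx : 0 ≤ x) : (x ^ d) ^ (α / d) = x ^ α := by
    rw [← Real.rpow_natCast, ← Real.rpow_mul hx, mul_div_cancel₀ _ hd.ne']
  have hcard : (F.card : ℝ) ≤ n := by
    have hF : F = T.edgeFinset := by ext; simp [F]
    have := hT.1.card_edgeFinset
    rw [Fintype.card_fin] at this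
    rw [hF]
    exact_mod_cast (show T.edgeFinset.card ≤ n by omega)
  have hsum : 0 ≤ ∑ e ∈ F, edgeDist v e ^ d :=
    Finset.sum_nonneg fun e _ ↦ pow_nonneg (edgeDist_nonneg e) _
  calc energy v T α = ∑ e ∈ F, (edgeDist v e ^ d) ^ (α / d) := by
        rw [energy_eq_sum_edgeDist_rpow]
        exact Finset.sum_congr rfl fun e _ ↦ (hpow (edgeDist_nonneg e)).symm
    _ ≤ (F.card : ℝ) ^ (1 - α / d) * (∑ e ∈ F, edgeDist v e ^ d) ^ (α / d) :=
        Real.sum_rpow_le_card_rpow_mul_sum_rpow F (fun e _ ↦ pow_nonneg (edgeDist_nonneg e) _)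
          hθ₀ hθ₁
    _ ≤ (n : ℝ) ^ (1 - α / d) * ((250 * ρ) ^ d) ^ (α / d) := by
        gcongr
        exact hT.sum_edgeDist_pow_finrank_le hv
    _ = (250 * ρ) ^ α * (n : ℝ) ^ (1 - α / d) := by rw [hpow (by positivity), mul_comm]

end Normed

lemma EuclideanSpace.dist_le_of_forall_mem_Icc {d : ℕ} {x : EuclideanSpace ℝ (Fin d)}
    (hx : ∀ i, x i ∈ Set.Icc (0 : ℝ) 1) :
    dist x (WithLp.toLp 2 fun _ ↦ 1 / 2) ≤ √d / 2 := by
  rw [EuclideanSpace.dist_eq]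
  calc √(∑ i, dist (x i) (1 / 2) ^ 2) ≤ √(∑ _i : Fin d, (1 / 2 : ℝ) ^ 2) := by
        gcongr with i
        rw [Real.dist_eq, abs_le]
        constructor <;> linarith [(hx i).1, (hx i).2]
    _ = √d / 2 := by
        rw [Finset.sum_const, Finset.card_univ, Fintype.card_fin, nsmul_eq_mul,
          Real.sqrt_mul (Nat.cast_nonneg d), Real.sqrt_sq (by norm_num)]
        ring

/-- For every dimension `d ≥ 1` and every exponent `0 < α < d` there is a constant
`C = C(d) > 0` such that for all `n ≥ 1`, all points in the cube `[0,1]^d` and every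
minimal spanning tree `T` over them, `E_α(T) ≤ C^α * n^(1 - α/d)`. -/
theorem mst_energy_bound_subcritical (d : ℕ) (hd : 1 ≤ d) :
    ∃ C : ℝ, 0 < C ∧ ∀ α : ℝ, 0 < α → α < (d : ℝ) → ∀ n : ℕ, 1 ≤ n →
      ∀ v : Fin n → EuclideanSpace ℝ (Fin d), (∀ j i, v j i ∈ Set.Icc (0:ℝ) 1) →
      ∀ T : SimpleGraph (Fin n), IsMST v T →
        energy v T α ≤ C ^ α * (n : ℝ) ^ (1 - α / d) := by
  have hdim : Module.finrank ℝ (EuclideanSpace ℝ (Fin d)) = d := finrank_euclideanSpace_fin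
  have : Nontrivial (EuclideanSpace ℝ (Fin d)) :=
    Module.nontrivial_of_finrank_pos (R := ℝ) (by omega)
  refine ⟨250 * (√d / 2), by positivity, fun α hα₀ hα _ n v hv T hT ↦ ?_⟩
  have := hT.energy_le (fun j ↦ EuclideanSpace.dist_le_of_forall_mem_Icc (hv j)) hα₀.le
    (by rw [hdim]; exact hα.le)
  rwa [hdim] at this
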